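/- Sign-soundness is preserved under the full Fitness-Function Generator translation: for every formula φ in the Boolean fragment (atoms a1 > a2 and a1 ≥ a2, closed under ∧, ∨, ¬), the generated arithmetic expression ρ(φ) (obtained by mapping atoms to a1 - a2, ∧ to min, ∨ to max, ¬ to unary minus) satisfies: ρ(φ) > 0 → φ holds and ρ(φ) < 0 → ¬φ holds, where the semantics of strict and non-strict atoms are a1 > a2 and a1 ≥ a2 respectively. (Note ρ(φ) = 0 is inconclusive: there exist formulas true with ρ = 0 and formulas false with ρ = 0.) -/
import Mathlib


/-- Boolean fragment with strict (a1 > a2) and non-strict (a1 ≥ a2) atoms. -/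
inductive Formula where
  | gt  : ℝ → ℝ → Formula
  | ge  : ℝ → ℝ → Formula
  | and : Formula → Formula → Formula
  | or  : Formula → Formula → Formula
  | not : Formula → Formula

/-- Boolean satisfaction. -/
def Formula.sat : Formula → Prop
  | .gt a b => a > b
  | .ge a b => a ≥ b
  | .and φ ψ => φ.sat ∧ ψ.sat
  | .or φ ψ => φ.sat ∨ ψ.sat
  | .not φ => ¬ φ.sat

/-- Quantitative semantics produced by the Fitness-Function Generator. -/
noncomputable def Formula.rho : Formula → ℝ
  | .gt a b => a - b
  | .ge a b => a - b
  | .and φ ψ => min φ.rho ψ.rho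
  | .or φ ψ => max φ.rho ψ.rho
  | .not φ => -φ.rho

/-- Sign-soundness of the full translation: positive robustness implies truth
and negative robustness implies falsity; robustness 0 is inconclusive (there is
a true formula with ρ = 0 and a false formula with ρ = 0). -/
theorem full_translation_sound :
    (∀ φ : Formula, (φ.rho > 0 → φ.sat) ∧ (φ.rho < 0 → ¬ φ.sat)) ∧
    (∃ φ : Formula, φ.sat ∧ φ.rho = 0) ∧
    (∃ φ : Formula, ¬ φ.sat ∧ φ.rho = 0) := by
  refine ⟨?_, ⟨.ge 0 0, by simp [Formula.sat, Formula.rho], by simp [Formula.rho]⟩,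
    ⟨.gt 0 0, by simp [Formula.sat, Formula.rho], by simp [Formula.rho]⟩⟩
  intro φ
  induction φ with
  | gt a b => constructor <;> intro h <;> simp [Formula.sat, Formula.rho] at * <;> linarith
  | ge a b => constructor <;> intro h <;> simp [Formula.sat, Formula.rho] at * <;> linarith
  | and φ ψ ihφ ihψ =>
    constructor <;> intro h <;> simp [Formula.sat, Formula.rho] at *
    · exact ⟨ihφ.1 h.1, ihψ.1 h.2⟩
    · rcases h with h | h
      · intro hφ _; exact ihφ.2 h hφ
      · intro _ hψ; exact ihψ.2 h hψ
  | or φ ψ ihφ ihψ =>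
    constructor <;> intro h <;> simp [Formula.sat, Formula.rho] at *
    · rcases h with h | h
      · exact Or.inl (ihφ.1 h)
      · exact Or.inr (ihψ.1 h)
    · exact ⟨ihφ.2 h.1, ihψ.2 h.2⟩
  | not φ ih =>
    constructor <;> intro h <;> simp [Formula.sat, Formula.rho] at *
    · exact ih.2 h
    · exact ih.1 h
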